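/- Let q = 2^r with r a positive integer and let β ∈ 𝔽_q^*. Then Σ_{α ∈ 𝔽_q \ {0,1}} λ(β/(α² + α)) = K(λ;β) − 1. -/

import Mathlib

open Finset Matrix

/-- The quadratic form `θ⁺(x) = ∑ i, x_i x_{n+i}` on `F^{2n}` (columns indexed by `Fin n ⊕ Fin n`). -/
def thetaPlus (F : Type) [Field F] (n : ℕ) (x : Fin n ⊕ Fin n → F) : F :=
  ∑ i : Fin n, x (Sum.inl i) * x (Sum.inr i)

/-- The orthogonal group `O⁺(2n,q)`: invertible matrices preserving `θ⁺`. -/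
noncomputable def OplusGrp (F : Type) [Field F] [Fintype F] [DecidableEq F] (n : ℕ) :
    Finset (Matrix (Fin n ⊕ Fin n) (Fin n ⊕ Fin n) F) := by
  classical
  exact Finset.univ.filter (fun w => IsUnit w ∧
    ∀ x : Fin n ⊕ Fin n → F, thetaPlus F n (w.mulVec x) = thetaPlus F n x)

/-- `SO⁺(2n,q)`: the kernel of `δ⁺(w) = Tr(B ᵗC)` on `O⁺(2n,q)`,
where `w = [[A,B],[C,D]]` in `n × n` blocks. -/
noncomputable def SOplusGrp (F : Type) [Field F] [Fintype F] [DecidableEq F] (n : ℕ) :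
    Finset (Matrix (Fin n ⊕ Fin n) (Fin n ⊕ Fin n) F) := by
  classical
  exact (OplusGrp F n).filter
    (fun w => Matrix.trace (Matrix.toBlocks₁₂ w * (Matrix.toBlocks₂₁ w)ᵀ) = 0)

/-- The trace map `tr(x) = x + x² + ⋯ + x^{2^{r−1}}`, valued in `𝔽₂ = {0,1} ⊆ F`. -/
def trF (F : Type) [Field F] (r : ℕ) (x : F) : F := ∑ i ∈ Finset.range r, x ^ 2 ^ i

/-- The canonical additive character `λ(x) = (−1)^{tr(x)} ∈ {±1} ⊆ ℤ`. -/
noncomputable def lam (F : Type) [Field F] (r : ℕ) (x : F) : ℤ := by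
  classical exact if trF F r x = 0 then 1 else -1

/-- The trace map `tr` viewed as a function into `𝔽₂ = ZMod 2`. -/
noncomputable def tr2 (F : Type) [Field F] (r : ℕ) (x : F) : ZMod 2 := by
  classical exact if trF F r x = 0 then 0 else 1

/-- The Kloosterman sum `K(λ;a) = ∑_{α ∈ F*} λ(α + aα⁻¹)`. -/
noncomputable def Kl (F : Type) [Field F] [Fintype F] (r : ℕ) (a : F) : ℤ := by
  classical
  exact ∑ α ∈ Finset.univ.filter (fun α : F => α ≠ 0), lam F r (α + a * α⁻¹)

/-- The `m`-dimensional Kloosterman sum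
`K_m(λ;a) = ∑_{α₁,…,α_m ∈ F*} λ(α₁ + ⋯ + α_m + aα₁⁻¹⋯α_m⁻¹)`;
for `m = 0` this is `K₀(λ;a) = λ(a)`. -/
noncomputable def Klm (F : Type) [Field F] [Fintype F] (r m : ℕ) (a : F) : ℤ := by
  classical
  exact ∑ v ∈ Finset.univ.filter (fun v : Fin m → F => ∀ i, v i ≠ 0),
    lam F r ((∑ i, v i) + a * (∏ i, v i)⁻¹)

/-- The power moment `MK^h = ∑_{a ∈ F*} K(λ;a)^h`. -/
noncomputable def MK (F : Type) [Field F] [Fintype F] (r h : ℕ) : ℤ := by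
  classical exact ∑ a ∈ Finset.univ.filter (fun a : F => a ≠ 0), (Kl F r a) ^ h

/-- The power moment `MK₂^h = ∑_{a ∈ F*} K₂(λ;a)^h` of 2-dimensional Kloosterman sums. -/
noncomputable def MK2 (F : Type) [Field F] [Fintype F] (r h : ℕ) : ℤ := by
  classical exact ∑ a ∈ Finset.univ.filter (fun a : F => a ≠ 0), (Klm F r 2 a) ^ h

/-- The binary code `C(G) = {u ∈ 𝔽₂^G : ∑_{g ∈ G} u_g Tr(g) = 0 in F}`. -/
noncomputable def code (F : Type) [Field F] [Fintype F] [DecidableEq F]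
    {ι : Type} [Fintype ι] [DecidableEq ι] (G : Finset (Matrix ι ι F)) :
    Finset (↥G → ZMod 2) := by
  classical
  exact Finset.univ.filter
    (fun u => ∑ g : ↥G, (u g).val • Matrix.trace (g : Matrix ι ι F) = 0)

/-- Number of codewords of Hamming weight `j` in the code `C(G)`. -/
noncomputable def wtCount (F : Type) [Field F] [Fintype F] [DecidableEq F]
    {ι : Type} [Fintype ι] [DecidableEq ι] (G : Finset (Matrix ι ι F)) (j : ℕ) : ℕ := by
  classical
  exact ((code F G).filter
    (fun u => (Finset.univ.filter (fun g : ↥G => u g = 1)).card = j)).card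

/-- `t! · S(h,t)` where `S(h,t)` is the Stirling number of the second kind,
`S(h,t) = (1/t!) ∑_{j=0}^{t} (−1)^{t−j} C(t,j) j^h`. -/
def tS (h t : ℕ) : ℤ :=
  ∑ j ∈ Finset.range (t + 1), (-1 : ℤ) ^ (t - j) * (t.choose j : ℤ) * (j : ℤ) ^ h

/-- Binomial coefficient with integer arguments: `0` whenever `k < 0` or `k > n`. -/
def ichoose (n k : ℤ) : ℤ := if 0 ≤ k ∧ k ≤ n then (n.toNat.choose k.toNat : ℤ) else 0

/-! In characteristic two, `α ↦ α² + α` is additive with kernel `{0, 1}` and lands in the kernel of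
the trace, since `tr (α²) = tr α`. A fibre is thus empty or of the form `{α, α + 1}` over a
trace-zero point, so it has at most `1 + λ(c)` elements; as `λ` is a nontrivial character (the trace
polynomial has degree `q / 2`), both counts sum to `q` and the fibre has exactly `1 + λ(c)`
elements. Substituting `c = α² + α` therefore gives
`∑_α λ(β/(α² + α)) = ∑_c (1 + λ(c)) λ(β/c) = ∑_c λ(β/c) + ∑_c λ(c + β/c) = 0 + (K(λ;β) + 1)`,
and the two excluded terms `α = 0, 1` each contribute `λ(β/0) = λ(0) = 1`. -/

section TraceCharTwo

variable {F : Type} [Field F] {r : ℕ}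

lemma charP_two_of_card_eq_two_pow [Fintype F] (hF : Fintype.card F = 2 ^ r) : CharP F 2 :=
  charP_of_card_eq_prime_pow hF

lemma trF_add [CharP F 2] (x y : F) : trF F r (x + y) = trF F r x + trF F r y := by
  simp only [trF, ← sum_add_distrib]
  exact sum_congr rfl fun i _ => add_pow_char_pow x y 2 i

lemma trF_zero : trF F r 0 = 0 :=
  sum_eq_zero fun i _ => zero_pow (by positivity)

lemma sq_trF [CharP F 2] (x : F) : trF F r x ^ 2 = trF F r (x ^ 2) := by
  rw [trF, trF, sum_pow_char]
  exact sum_congr rfl fun i _ => by rw [← pow_mul, ← pow_mul, mul_comm]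

variable [Fintype F]

lemma trF_sq (hF : Fintype.card F = 2 ^ r) (x : F) : trF F r (x ^ 2) = trF F r x := by
  have hx : x ^ 2 ^ r = x := hF ▸ FiniteField.pow_card x
  have h := (sum_range_succ' (fun i => x ^ 2 ^ i) r).symm.trans (sum_range_succ _ r)
  simp only [pow_zero, pow_one, hx, add_left_inj] at h
  rw [trF, trF, ← h]
  exact sum_congr rfl fun i _ => by rw [← pow_mul, pow_succ, mul_comm]

lemma trF_sq_add_self (hF : Fintype.card F = 2 ^ r) (α : F) : trF F r (α ^ 2 + α) = 0 := by
  have := charP_two_of_card_eq_two_pow hF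
  rw [trF_add, trF_sq hF, CharTwo.add_self_eq_zero]

lemma trF_eq_zero_or_one (hF : Fintype.card F = 2 ^ r) (x : F) :
    trF F r x = 0 ∨ trF F r x = 1 := by
  have := charP_two_of_card_eq_two_pow hF
  have hsq : trF F r x ^ 2 = trF F r x := (sq_trF x).trans (trF_sq hF x)
  have h : trF F r x * (trF F r x - 1) = 0 := by linear_combination hsq
  exact (mul_eq_zero.mp h).imp id sub_eq_zero.mp

open Polynomial in
lemma exists_trF_ne_zero (hr : 1 ≤ r) (hF : Fintype.card F = 2 ^ r) : ∃ x : F, trF F r x ≠ 0 := by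
  by_contra! h
  set p : F[X] := ∑ i ∈ range r, X ^ 2 ^ i
  have hcoeff : p.coeff 1 = 1 := by
    simpa [p, coeff_X_pow, eq_comm (a := 1)] using Nat.one_le_iff_ne_zero.mp hr
  have hdeg : p.natDegree ≤ 2 ^ (r - 1) := natDegree_sum_le_of_forall_le _ _ fun i hi => by
    rw [natDegree_X_pow]
    exact Nat.pow_le_pow_right two_pos (by grind)
  have hp : p = 0 := eq_zero_of_natDegree_lt_card_of_eval_eq_zero p Function.injective_id
    (fun x => by simpa [p, eval_finsetSum, trF] using h x) (by
      rw [hF]; exact hdeg.trans_lt (Nat.pow_lt_pow_right (by norm_num) (by omega)))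
  simp [hp] at hcoeff

end TraceCharTwo

section Character

variable {F : Type} [Field F] {r : ℕ}

lemma lam_zero : lam F r 0 = 1 := by
  simp [lam, trF_zero]

lemma lam_add [Fintype F] (hF : Fintype.card F = 2 ^ r) (x y : F) :
    lam F r (x + y) = lam F r x * lam F r y := by
  have := charP_two_of_card_eq_two_pow hF
  unfold lam
  rw [trF_add]
  rcases trF_eq_zero_or_one hF x with hx | hx <;> rcases trF_eq_zero_or_one hF y with hy | hy <;>
    simp [hx, hy, CharTwo.add_self_eq_zero]

noncomputable def lamAddChar [Fintype F] (hF : Fintype.card F = 2 ^ r) : AddChar F ℤ where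
  toFun := lam F r
  map_zero_eq_one' := lam_zero
  map_add_eq_mul' := lam_add hF

variable [Fintype F]

lemma sum_lam_eq_zero (hr : 1 ≤ r) (hF : Fintype.card F = 2 ^ r) : ∑ x : F, lam F r x = 0 := by
  obtain ⟨x, hx⟩ := exists_trF_ne_zero hr hF
  exact AddChar.sum_eq_zero_of_ne_one (ψ := lamAddChar hF)
    (AddChar.ne_one_iff.mpr ⟨x, by simp [lamAddChar, lam, hx]⟩)

-- Since `β / 0 = 0`, the map `c ↦ β / c` is an involution of all of `F`.
lemma sum_lam_div {β : F} (hβ : β ≠ 0) : ∑ c : F, lam F r (β / c) = ∑ c : F, lam F r c :=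
  Fintype.sum_bijective _ (Function.Involutive.bijective fun _ => div_div_cancel₀ hβ) _ _
    fun _ => rfl

lemma sum_lam_add_div (β : F) : ∑ c : F, lam F r (c + β / c) = Kl F r β + 1 := by
  classical
  rw [Kl, ← sum_erase_add univ _ (mem_univ 0), filter_ne']
  simp [div_eq_mul_inv, lam_zero]

end Character

section ArtinSchreier

variable {F : Type} [Field F] {r : ℕ}

lemma sq_add_self_eq_sq_add_self_iff [CharP F 2] {α x : F} :
    x ^ 2 + x = α ^ 2 + α ↔ x = α ∨ x = α + 1 := by
  have h2 : (2 : F) = 0 := CharP.cast_eq_zero F 2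
  constructor
  · intro h
    have hz : (x - α) * (x - α - 1) = 0 := by
      linear_combination h + (α ^ 2 + α - x - α * x) * h2
    exact (mul_eq_zero.mp hz).imp (fun h => by linear_combination h) fun h => by
      linear_combination h
  · rintro (rfl | rfl)
    · rfl
    · linear_combination (α + 1) * h2

variable [Fintype F] [DecidableEq F]

lemma card_sq_add_self_eq_le (hF : Fintype.card F = 2 ^ r) (c : F) :
    (#{α | α ^ 2 + α = c} : ℤ) ≤ 1 + lam F r c := by
  have := charP_two_of_card_eq_two_pow hF
  rcases (univ.filter fun α : F => α ^ 2 + α = c).eq_empty_or_nonempty with h | ⟨α, hα⟩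
  · rw [h, lam]
    split_ifs <;> norm_num
  · obtain rfl : α ^ 2 + α = c := (mem_filter.mp hα).2
    have hfiber : ({x | x ^ 2 + x = α ^ 2 + α} : Finset F) = {α, α + 1} := by
      ext x
      simp [sq_add_self_eq_sq_add_self_iff]
    rw [hfiber, card_pair (by simp), lam, if_pos (trF_sq_add_self hF α)]
    norm_num

lemma card_sq_add_self_eq (hr : 1 ≤ r) (hF : Fintype.card F = 2 ^ r) (c : F) :
    (#{α | α ^ 2 + α = c} : ℤ) = 1 + lam F r c := by
  -- Both sides of the inequality `card_sq_add_self_eq_le` sum to `q` over `c`.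
  have hsum : ∑ c : F, (#{α | α ^ 2 + α = c} : ℤ) = ∑ c : F, (1 + lam F r c) := by
    rw [sum_add_distrib, sum_lam_eq_zero hr hF, ← Nat.cast_sum,
      ← card_eq_sum_card_fiberwise (by simp)]
    simp
  exact (sum_eq_sum_iff_of_le fun c _ => card_sq_add_self_eq_le hF c).mp hsum c (mem_univ c)

lemma sum_comp_sq_add_self {R : Type*} [AddCommGroup R] (hr : 1 ≤ r)
    (hF : Fintype.card F = 2 ^ r) (g : F → R) :
    ∑ α : F, g (α ^ 2 + α) = ∑ c : F, (1 + lam F r c) • g c := by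
  rw [← sum_fiberwise univ (fun α => α ^ 2 + α)]
  refine sum_congr rfl fun c _ => ?_
  rw [sum_congr rfl fun α hα => by rw [(mem_filter.mp hα).2], sum_const,
    ← card_sq_add_self_eq hr hF c, natCast_zsmul]

end ArtinSchreier

theorem stmt13 (r : ℕ) (hr : 1 ≤ r) (F : Type) [Field F] [Fintype F] [DecidableEq F]
    (hF : Fintype.card F = 2 ^ r) (β : F) (hβ : β ≠ 0) :
    ∑ α ∈ Finset.univ.filter (fun α : F => α ≠ 0 ∧ α ≠ 1), lam F r (β / (α ^ 2 + α)) =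
      Kl F r β - 1 := by
  have := charP_two_of_card_eq_two_pow hF
  have hall : ∑ α : F, lam F r (β / (α ^ 2 + α)) = Kl F r β + 1 := by
    simp only [sum_comp_sq_add_self hr hF (fun c => lam F r (β / c)), smul_eq_mul, add_mul,
      one_mul, sum_add_distrib, ← lam_add hF, sum_lam_div hβ, sum_lam_eq_zero hr hF,
      sum_lam_add_div, zero_add]
  have hdegenerate : ∑ α ∈ univ.filter (fun α : F => ¬(α ≠ 0 ∧ α ≠ 1)),
      lam F r (β / (α ^ 2 + α)) = 2 := by
    have h01 : univ.filter (fun α : F => ¬(α ≠ 0 ∧ α ≠ 1)) = {0, 1} := by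
      ext α
      simp only [mem_filter, mem_univ, true_and, mem_insert, mem_singleton]
      tauto
    rw [h01, sum_pair zero_ne_one, one_pow, CharTwo.add_self_eq_zero]
    simp [lam_zero]
  linarith [sum_filter_add_sum_filter_not univ (fun α : F => α ≠ 0 ∧ α ≠ 1)
    (fun α => lam F r (β / (α ^ 2 + α)))]
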